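/- arXiv:1701.04431 — 7 statements merged into one kernel-verified Lean document; each statement's English description precedes it below -/
import Mathlib

section
/- Suppose γ and γ̄ are two probability measures on X × Y × Z, both concentrated on graphs of measurable functions over X (γ = (Id, F)_# μ and γ̄ = (Id, F̄)_# μ for F, F̄ : X → Y × Z), and suppose the average (γ + γ̄)/2 is also concentrated on the graph of a measurable function over X. Then F = F̄ μ-almost everywhere, and hence γ = γ̄. -/
open MeasureTheory

/-- if two graph-type measures have a graph-type average, the graphs coincide a.e. -/
theorem stmt_7 {X W : Type*} [MeasurableSpace X] [MeasurableSpace W] [StandardBorelSpace W]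
    (μ : Measure X) [IsProbabilityMeasure μ]
    (F Fbar G : X → W) (hF : Measurable F) (hFbar : Measurable Fbar) (hG : Measurable G)
    (γ γbar : Measure (X × W))
    (hγ : γ = μ.map (fun x => (x, F x)))
    (hγbar : γbar = μ.map (fun x => (x, Fbar x)))
    (havg : (2 : ENNReal)⁻¹ • (γ + γbar) = μ.map (fun x => (x, G x))) :
    F =ᵐ[μ] Fbar ∧ γ = γbar := by
  letI := upgradeStandardBorel W
  have hS : MeasurableSet {p : X × W | p.2 = G p.1} :=
    MeasureTheory.StronglyMeasurable.measurableSet_eq_fun measurable_snd.stronglyMeasurable (hG.comp measurable_fst).stronglyMeasurable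
  have hmF : Measurable (fun x => (x, F x)) := measurable_id.prodMk hF
  have hmFbar : Measurable (fun x => (x, Fbar x)) := measurable_id.prodMk hFbar
  have hmG : Measurable (fun x => (x, G x)) := measurable_id.prodMk hG
  have hγS : γ {p : X × W | p.2 = G p.1} = μ {x | F x = G x} := by
    rw [hγ, Measure.map_apply hmF hS]; rfl
  have hγbarS : γbar {p : X × W | p.2 = G p.1} = μ {x | Fbar x = G x} := by
    rw [hγbar, Measure.map_apply hmFbar hS]; rfl
  have hGS : (μ.map (fun x => (x, G x))) {p : X × W | p.2 = G p.1} = 1 := by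
    rw [Measure.map_apply hmG hS]
    simpa using measure_univ
  have hsum : (2 : ENNReal)⁻¹ * (μ {x | F x = G x} + μ {x | Fbar x = G x}) = 1 := by
    have := congrArg (fun ν : Measure (X × W) => ν {p : X × W | p.2 = G p.1}) havg
    simp only [Measure.smul_apply, Measure.add_apply, hγS, hγbarS, hGS, smul_eq_mul] at this
    rw [mul_add] at this ⊢
    exact this
  have h1 : μ {x | F x = G x} ≤ 1 := prob_le_one
  have h2 : μ {x | Fbar x = G x} ≤ 1 := prob_le_one
  have hsum' : μ {x | F x = G x} + μ {x | Fbar x = G x} = 2 := by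
    have h2ne : (2 : ENNReal) ≠ 0 := by norm_num
    have := congrArg (fun t => (2 : ENNReal) * t) hsum
    simp only [← mul_assoc, ENNReal.mul_inv_cancel h2ne (by norm_num), one_mul, mul_one] at this
    exact this
  have hF1 : μ {x | F x = G x} = 1 := by
    by_contra h
    have hlt : μ {x | F x = G x} < 1 := lt_of_le_of_ne h1 h
    have : μ {x | F x = G x} + μ {x | Fbar x = G x} < 2 := by
      calc μ {x | F x = G x} + μ {x | Fbar x = G x} < 1 + 1 :=
        ENNReal.add_lt_add_of_lt_of_le (h2.trans_lt ENNReal.one_lt_top).ne hlt h2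
      _ = 2 := by norm_num
    exact absurd hsum' this.ne
  have hFbar1 : μ {x | Fbar x = G x} = 1 := by
    rw [hF1] at hsum'
    have h : (1 : ENNReal) + μ {x | Fbar x = G x} = 1 + 1 := by rw [hsum']; norm_num
    exact ENNReal.add_right_inj (by norm_num) |>.mp h
  have hFG : F =ᵐ[μ] G := by
    have : μ {x | F x = G x}ᶜ = 0 := by
      rw [measure_compl (MeasureTheory.StronglyMeasurable.measurableSet_eq_fun hF.stronglyMeasurable hG.stronglyMeasurable) (measure_ne_top _ _), hF1, measure_univ]
      simp
    exact this
  have hFbarG : Fbar =ᵐ[μ] G := by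
    have : μ {x | Fbar x = G x}ᶜ = 0 := by
      rw [measure_compl (MeasureTheory.StronglyMeasurable.measurableSet_eq_fun hFbar.stronglyMeasurable hG.stronglyMeasurable) (measure_ne_top _ _), hFbar1, measure_univ]
      simp
    exact this
  have hFF : F =ᵐ[μ] Fbar := hFG.trans hFbarG.symm
  refine ⟨hFF, ?_⟩
  rw [hγ, hγbar]
  exact Measure.map_congr (hFF.mono fun x hx => by simp [hx])
end

section
/- Suppose s and s̄(x,y) := max_z s(x,y,z) are both differentiable in x, and s satisfies the twist on z-trivial splitting sets condition. Then s̄ satisfies the twist condition: for each x, the map y ↦ D_x s̄(x,y) is injective. -/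
/-!
Fix `x` and suppose `D_x s̄(x, y₁) = D_x s̄(x, y₂)`. By compactness of `Z` pick maximizers `zᵢ` of
`s(x, yᵢ, ·)`. The set of all pairs `(y, z)` with `z` maximizing `s(x, y, ·)` is a z-trivial splitting
set at `x` (with potential `s̄(x, ·)`), and by the envelope theorem
`D_x s(x, yᵢ, zᵢ) = D_x s̄(x, yᵢ)`. The twist on this splitting set forces `(y₁, z₁) = (y₂, z₂)`.
-/

variable {nx : ℕ} {Y Z : Type*}

/-- A set `S ⊆ Y × Z` is a z-trivial splitting set at `x`. -/
def IsZTrivialSplittingSetAt (s : EuclideanSpace ℝ (Fin nx) → Y → Z → ℝ)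
    (x : EuclideanSpace ℝ (Fin nx)) (S : Set (Y × Z)) : Prop :=
  ∃ (V : Y → ℝ), (∀ y z, s x y z ≤ V y) ∧ ∀ p ∈ S, s x p.1 p.2 = V p.1

/-- `s` is twisted on z-trivial splitting sets. -/
def TwistedOnZTrivialSplittingSets (s : EuclideanSpace ℝ (Fin nx) → Y → Z → ℝ) : Prop :=
  ∀ (x : EuclideanSpace ℝ (Fin nx)) (S : Set (Y × Z)), IsZTrivialSplittingSetAt s x S →
    ∀ p ∈ S, ∀ q ∈ S,
      fderiv ℝ (fun x' => s x' p.1 p.2) x = fderiv ℝ (fun x' => s x' q.1 q.2) x → p = q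

open Filter Set Topology

theorem fderiv_eq_of_eventually_le_of_eq {E : Type*} [NormedAddCommGroup E] [NormedSpace ℝ E]
    {f g : E → ℝ} {x : E} (hf : DifferentiableAt ℝ f x) (hg : DifferentiableAt ℝ g x)
    (hle : ∀ᶠ x' in 𝓝 x, g x' ≤ f x') (hx : g x = f x) :
    fderiv ℝ f x = fderiv ℝ g x := by
  have hmin : IsLocalMin (fun x' => f x' - g x') x :=
    hle.mono fun x' hx' => by simp only [hx, sub_self]; linarith
  rw [← sub_eq_zero, ← fderiv_fun_sub hf hg]
  exact hmin.fderiv_eq_zero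

section Compact

variable [TopologicalSpace Z] [CompactSpace Z] {f : Z → ℝ}

theorem Continuous.le_ciSup_of_compactSpace (hf : Continuous f) (z : Z) : f z ≤ ⨆ z, f z :=
  le_ciSup (isCompact_range hf).bddAbove z

theorem Continuous.exists_eq_ciSup_of_compactSpace [Nonempty Z] (hf : Continuous f) :
    ∃ z, f z = ⨆ z, f z :=
  (isCompact_range hf).sSup_mem (range_nonempty f)

theorem fderiv_ciSup_eq_of_eq_ciSup {E : Type*} [NormedAddCommGroup E] [NormedSpace ℝ E]
    {s : E → Z → ℝ} (hs : ∀ x, Continuous (s x)) {x : E} {z : Z}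
    (hsz : DifferentiableAt ℝ (fun x' => s x' z) x)
    (hsup : DifferentiableAt ℝ (fun x' => ⨆ z, s x' z) x) (hmax : s x z = ⨆ z, s x z) :
    fderiv ℝ (fun x' => ⨆ z, s x' z) x = fderiv ℝ (fun x' => s x' z) x :=
  fderiv_eq_of_eventually_le_of_eq hsup hsz
    (Eventually.of_forall fun x' => (hs x').le_ciSup_of_compactSpace z) hmax

theorem isZTrivialSplittingSetAt_setOf_eq_ciSup (s : EuclideanSpace ℝ (Fin nx) → Y → Z → ℝ)
    (x : EuclideanSpace ℝ (Fin nx)) (hs : ∀ y, Continuous (s x y)) :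
    IsZTrivialSplittingSetAt s x {p | s x p.1 p.2 = ⨆ z, s x p.1 z} :=
  ⟨fun y => ⨆ z, s x y z, fun y z => (hs y).le_ciSup_of_compactSpace z, fun _ hp => hp⟩

end Compact

/-- if s is twisted on z-trivial splitting sets, the reduced surplus
`s̄(x,y) = max_z s(x,y,z)` satisfies the classical twist condition. -/
theorem stmt_9 [TopologicalSpace Y] [TopologicalSpace Z] [CompactSpace Z] [Nonempty Z]
    (s : EuclideanSpace ℝ (Fin nx) → Y → Z → ℝ)
    (hs : Continuous fun w : EuclideanSpace ℝ (Fin nx) × Y × Z => s w.1 w.2.1 w.2.2)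
    (sbar : EuclideanSpace ℝ (Fin nx) → Y → ℝ)
    (hsbar : ∀ x y, sbar x y = ⨆ z : Z, s x y z)
    (hsdiff : ∀ (y : Y) (z : Z), Differentiable ℝ (fun x => s x y z))
    (hsbardiff : ∀ y : Y, Differentiable ℝ (fun x => sbar x y))
    (htwist : TwistedOnZTrivialSplittingSets s) :
    ∀ x : EuclideanSpace ℝ (Fin nx),
      Function.Injective (fun y => fderiv ℝ (fun x' => sbar x' y) x) := by
  obtain rfl : sbar = fun x y => ⨆ z, s x y z := funext₂ hsbar
  intro x y₁ y₂ hD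
  have hcont : ∀ x y, Continuous (s x y) := fun x y =>
    hs.comp (continuous_const.prodMk (continuous_const.prodMk continuous_id))
  have henv : ∀ y z, s x y z = ⨆ z, s x y z →
      fderiv ℝ (fun x' => ⨆ z, s x' y z) x = fderiv ℝ (fun x' => s x' y z) x :=
    fun y z => fderiv_ciSup_eq_of_eq_ciSup (fun x' => hcont x' y) (hsdiff y z x) (hsbardiff y x)
  obtain ⟨z₁, hz₁⟩ := (hcont x y₁).exists_eq_ciSup_of_compactSpace
  obtain ⟨z₂, hz₂⟩ := (hcont x y₂).exists_eq_ciSup_of_compactSpace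
  have hpair := htwist x _ (isZTrivialSplittingSetAt_setOf_eq_ciSup s x (hcont x))
    (y₁, z₁) hz₁ (y₂, z₂) hz₂ (by rw [← henv y₁ z₁ hz₁, ← henv y₂ z₂ hz₂]; exact hD)
  exact congrArg Prod.fst hpair
end

section
/- Suppose s is x-z twisted (for each x,y, the map z ↦ D_x s(x,y,z) is injective), s and s̄ are differentiable in x, and s̄(x,y) := max_z s(x,y,z) satisfies the twist condition (y ↦ D_x s̄(x,y) injective for each x). Then s is twisted on z-trivial splitting sets. -/
variable {nx : ℕ} {Y Z : Type*}

/-- if s is x-z twisted and the reduced surplus s̄ is twisted, then s is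
twisted on z-trivial splitting sets. -/
theorem stmt_10 [TopologicalSpace Y] [TopologicalSpace Z] [CompactSpace Z] [Nonempty Z]
    (s : EuclideanSpace ℝ (Fin nx) → Y → Z → ℝ)
    (hs : Continuous fun w : EuclideanSpace ℝ (Fin nx) × Y × Z => s w.1 w.2.1 w.2.2)
    (sbar : EuclideanSpace ℝ (Fin nx) → Y → ℝ)
    (hsbar : ∀ x y, sbar x y = ⨆ z : Z, s x y z)
    (hsdiff : ∀ (y : Y) (z : Z), Differentiable ℝ (fun x => s x y z))
    (hsbardiff : ∀ y : Y, Differentiable ℝ (fun x => sbar x y))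
    (hxz : ∀ (x : EuclideanSpace ℝ (Fin nx)) (y : Y),
      Function.Injective (fun z : Z => fderiv ℝ (fun x' => s x' y z) x))
    (hbartwist : ∀ x : EuclideanSpace ℝ (Fin nx),
      Function.Injective (fun y : Y => fderiv ℝ (fun x' => sbar x' y) x)) :
    TwistedOnZTrivialSplittingSets s := by
  intro x S hS p hp q hq hfd
  obtain ⟨V, hVle, hVeq⟩ := hS
  -- s x' y z ≤ sbar x' y for all x', y, z
  have hle : ∀ (x' : EuclideanSpace ℝ (Fin nx)) (y : Y) (z : Z), s x' y z ≤ sbar x' y := by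
    intro x' y z
    rw [hsbar]
    have hc : Continuous fun z : Z => s x' y z :=
      hs.comp (continuous_const.prodMk (continuous_const.prodMk continuous_id))
    exact le_ciSup (isCompact_range hc).bddAbove z
  -- envelope: at a maximizer, fderiv of sbar = fderiv of s
  have henv : ∀ r ∈ S, fderiv ℝ (fun x' => sbar x' r.1) x
      = fderiv ℝ (fun x' => s x' r.1 r.2) x := by
    intro r hr
    have hmax : sbar x r.1 = s x r.1 r.2 := by
      refine le_antisymm ?_ (hle x r.1 r.2)
      rw [hsbar]
      refine ciSup_le fun z => ?_
      calc s x r.1 z ≤ V r.1 := hVle r.1 z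
        _ = s x r.1 r.2 := (hVeq r hr).symm
    set f : EuclideanSpace ℝ (Fin nx) → ℝ := fun x' => sbar x' r.1 - s x' r.1 r.2 with hf
    have hmin : IsLocalMin f x := by
      apply IsMinOn.isLocalMin (s := Set.univ)
      · intro x' _
        simp only [hf]
        have := hle x' r.1 r.2
        have h0 : f x = 0 := by simp [hf, hmax]
        simp only [Set.mem_setOf_eq]
        rw [h0] at *
        linarith
      · exact Filter.univ_mem
    have hdf : DifferentiableAt ℝ f x := ((hsbardiff r.1) x).sub ((hsdiff r.1 r.2) x)
    have h0 : fderiv ℝ f x = 0 := hmin.fderiv_eq_zero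
    have : fderiv ℝ f x = fderiv ℝ (fun x' => sbar x' r.1) x
        - fderiv ℝ (fun x' => s x' r.1 r.2) x :=
      fderiv_sub ((hsbardiff r.1) x) ((hsdiff r.1 r.2) x)
    rw [this] at h0
    exact sub_eq_zero.mp h0
  have hsb : fderiv ℝ (fun x' => sbar x' p.1) x = fderiv ℝ (fun x' => sbar x' q.1) x := by
    rw [henv p hp, henv q hq, hfd]
  have hy : p.1 = q.1 := hbartwist x hsb
  have hz : p.2 = q.2 := by
    apply hxz x p.1
    show fderiv ℝ (fun x' => s x' p.1 p.2) x = fderiv ℝ (fun x' => s x' p.1 q.2) x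
    rw [hfd, hy]
  exact Prod.ext hy hz
end

section
/- Let s(x,y,z) = u(x,z) + v(y,z) with u, v C¹, where for each fixed x, y every maximizer of z ↦ u(x,z) + v(y,z) lies in the interior of Z. If z ↦ D_x u(x,z) is injective for each x, and y ↦ D_z v(y,z) is injective for each z, then s is twisted on z-trivial splitting sets: if S_x is a z-trivial splitting set at x and (y₀,z₀), (y₁,z₁) ∈ S_x satisfy D_x s(x,y₀,z₀) = D_x s(x,y₁,z₁), then (y₀,z₀) = (y₁,z₁). -/
/-! Since `v(y,z)` does not depend on `x`, `D_x s(x,y,z) = D_x u(x,z)`, so the twist of `u` forces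
the two points of the splitting set to share their `z`. A point of a z-trivial splitting set
maximizes `z ↦ s(x,y,z)` over `Z`, in the interior by assumption, so the first-order condition gives
`D_z v(y,z) = -D_z u(x,z)`; at a common `z` the twist of `v` then forces a common `y`. -/

theorem fderiv_eq_neg_of_isMaxOn_add {E : Type*} [NormedAddCommGroup E] [NormedSpace ℝ E]
    {f g : E → ℝ} {Z : Set E} {z : E} (hf : DifferentiableAt ℝ f z)
    (hg : DifferentiableAt ℝ g z) (hmax : IsMaxOn (fun w => f w + g w) Z z)
    (hz : z ∈ interior Z) : fderiv ℝ g z = -fderiv ℝ f z := by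
  have hcrit : fderiv ℝ (fun w => f w + g w) z = 0 :=
    (hmax.isLocalMax (mem_interior_iff_mem_nhds.mp hz)).fderiv_eq_zero
  rw [fderiv_fun_add hf hg] at hcrit
  exact eq_neg_of_add_eq_zero_right hcrit

theorem Differentiable.of_uncurry {E F G : Type*} [NormedAddCommGroup E] [NormedSpace ℝ E]
    [NormedAddCommGroup F] [NormedSpace ℝ F] [NormedAddCommGroup G] [NormedSpace ℝ G]
    {f : E → F → G} (hf : Differentiable ℝ (Function.uncurry f)) (a : E) :
    Differentiable ℝ (f a) :=
  hf.comp (differentiable_const a |>.prodMk differentiable_id)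

/-- strictly hedonic surpluses `s(x,y,z)=u(x,z)+v(y,z)` with interior maximizers
and the two twist conditions are twisted on z-trivial splitting sets. -/
theorem stmt_11 {nx ny nz : ℕ}
    (Z : Set (EuclideanSpace ℝ (Fin nz)))
    (u : EuclideanSpace ℝ (Fin nx) → EuclideanSpace ℝ (Fin nz) → ℝ)
    (v : EuclideanSpace ℝ (Fin ny) → EuclideanSpace ℝ (Fin nz) → ℝ)
    (hu : ContDiff ℝ 1 (fun w : EuclideanSpace ℝ (Fin nx) × EuclideanSpace ℝ (Fin nz) => u w.1 w.2))
    (hv : ContDiff ℝ 1 (fun w : EuclideanSpace ℝ (Fin ny) × EuclideanSpace ℝ (Fin nz) => v w.1 w.2))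
    -- every maximizer over Z of z ↦ u(x,z)+v(y,z) lies in the interior of Z
    (hmax : ∀ (x : EuclideanSpace ℝ (Fin nx)) (y : EuclideanSpace ℝ (Fin ny)),
      ∀ z ∈ Z, (∀ z' ∈ Z, u x z' + v y z' ≤ u x z + v y z) → z ∈ interior Z)
    -- u is x-z twisted
    (hutwist : ∀ x : EuclideanSpace ℝ (Fin nx),
      Set.InjOn (fun z => fderiv ℝ (fun x' => u x' z) x) Z)
    -- v is z-y twisted
    (hvtwist : ∀ z : EuclideanSpace ℝ (Fin nz),
      Function.Injective (fun y => fderiv ℝ (fun z' => v y z') z)) :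
    -- twist on z-trivial splitting sets for s(x,y,z) = u(x,z) + v(y,z), goods restricted to Z
    ∀ (x : EuclideanSpace ℝ (Fin nx))
      (S : Set (EuclideanSpace ℝ (Fin ny) × EuclideanSpace ℝ (Fin nz)))
      (V : EuclideanSpace ℝ (Fin ny) → ℝ),
      (∀ p ∈ S, p.2 ∈ Z) →
      (∀ (y : EuclideanSpace ℝ (Fin ny)), ∀ z ∈ Z, u x z + v y z ≤ V y) →
      (∀ p ∈ S, u x p.2 + v p.1 p.2 = V p.1) →
      ∀ p ∈ S, ∀ q ∈ S,
        fderiv ℝ (fun x' => u x' p.2 + v p.1 p.2) x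
          = fderiv ℝ (fun x' => u x' q.2 + v q.1 q.2) x → p = q := by
  intro x S V hSZ hle hsplit p hp q hq hderiv
  have hz : p.2 = q.2 :=
    hutwist x (hSZ p hp) (hSZ q hq) (by simpa only [fderiv_add_const] using hderiv)
  have hfoc : ∀ r ∈ S, fderiv ℝ (v r.1) r.2 = -fderiv ℝ (u x) r.2 := by
    intro r hr
    have hrmax : IsMaxOn (fun z => u x z + v r.1 z) Z r.2 :=
      fun z hz => (hle r.1 z hz).trans (hsplit r hr).ge
    exact fderiv_eq_neg_of_isMaxOn_add
      ((hu.differentiable one_ne_zero).of_uncurry x r.2)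
      ((hv.differentiable one_ne_zero).of_uncurry r.1 r.2)
      hrmax (hmax x r.1 r.2 (hSZ r hr) hrmax)
  have hy : p.1 = q.1 := hvtwist p.2 <| show fderiv ℝ (v p.1) p.2 = fderiv ℝ (v q.1) p.2 by
    rw [hfoc p hp, hz, hfoc q hq]
  exact Prod.ext hy hz
end

section
/- Let s(x,y,z) = xᵀAy + xᵀBz + yᵀCz + zᵀDz + f(x) + g(y) on ℝⁿ × ℝⁿ × ℝⁿ with D + Dᵀ negative definite, C invertible, and B − A(Cᵀ)⁻¹(D + Dᵀ) nonsingular, with f differentiable. Then s is twisted on z-trivial splitting sets: for each x and p ∈ ℝⁿ, at most one point (y,z) of any z-trivial splitting set at x satisfies p = D_x s(x,y,z). -/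
/-!
At a point `(y, z)` of a `z`-trivial splitting set, `z` maximises the quadratic
`z' ↦ s(x, y, z')`, so its gradient `Bᵀx + Cᵀy + (D + Dᵀ)z` vanishes, while
`D_x s(x, y, z) = Ay + Bz + Df(x)`. Two such points with the same `x`-derivative therefore
solve the same linear system with block matrix `[[A, B], [Cᵀ, D + Dᵀ]]`, which is injective
because `Cᵀ` and its Schur complement `B - A(Cᵀ)⁻¹(D + Dᵀ)` are invertible.
-/

open Matrix

namespace Matrix

variable {ι : Type*} [Fintype ι]

lemma quadratic_add_smul (a z v : ι → ℝ) (D : Matrix ι ι ℝ) (t : ℝ) :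
    a ⬝ᵥ (z + t • v) + (z + t • v) ⬝ᵥ D *ᵥ (z + t • v) =
      a ⬝ᵥ z + z ⬝ᵥ D *ᵥ z + t * ((a + (D + Dᵀ) *ᵥ z) ⬝ᵥ v) + t ^ 2 * (v ⬝ᵥ D *ᵥ v) := by
  have hT : (Dᵀ *ᵥ z) ⬝ᵥ v = z ⬝ᵥ D *ᵥ v := by
    rw [mulVec_transpose, dotProduct_mulVec]
  simp only [dotProduct_add, add_dotProduct, mulVec_add, mulVec_smul, dotProduct_smul,
    smul_dotProduct, add_mulVec, smul_eq_mul, hT, dotProduct_comm v (D *ᵥ z)]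
  ring

lemma add_mulVec_eq_zero_of_le {a z : ι → ℝ} {D : Matrix ι ι ℝ}
    (h : ∀ v, a ⬝ᵥ v + v ⬝ᵥ D *ᵥ v ≤ a ⬝ᵥ z + z ⬝ᵥ D *ᵥ z) :
    a + (D + Dᵀ) *ᵥ z = 0 := by
  refine dotProduct_eq_zero_iff.mp fun v => ?_
  set c := (a + (D + Dᵀ) *ᵥ z) ⬝ᵥ v
  set d := v ⬝ᵥ D *ᵥ v
  set e := a ⬝ᵥ z + z ⬝ᵥ D *ᵥ z
  have hline : IsLocalMax (fun t : ℝ => e + t * c + t ^ 2 * d) 0 := by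
    refine IsMaxOn.isLocalMax (fun t _ => ?_) Filter.univ_mem
    have := h (z + t • v)
    rw [quadratic_add_smul] at this
    show e + t * c + t ^ 2 * d ≤ e + 0 * c + 0 ^ 2 * d
    simpa only [zero_mul, zero_pow two_ne_zero, add_zero]
  have hderiv : HasDerivAt (fun t : ℝ => e + t * c + t ^ 2 * d) c 0 := by
    simpa using (((hasDerivAt_id' (0 : ℝ)).mul_const c).const_add e).fun_add
      ((hasDerivAt_pow 2 (0 : ℝ)).mul_const d)
  exact hline.hasDerivAt_eq_zero hderiv

lemma eq_and_eq_of_mulVec_add_mulVec_eq {K : Type*} [Field K] [DecidableEq ι]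
    {A B E M : Matrix ι ι K} (hE : IsUnit E) (hS : IsUnit (B - A * E⁻¹ * M))
    {y z y' z' : ι → K} (h₁ : A *ᵥ y + B *ᵥ z = A *ᵥ y' + B *ᵥ z')
    (h₂ : E *ᵥ y + M *ᵥ z = E *ᵥ y' + M *ᵥ z') : y = y' ∧ z = z' := by
  have hy : y - y' = -(E⁻¹ *ᵥ M *ᵥ (z - z')) := calc
    y - y' = E⁻¹ *ᵥ E *ᵥ (y - y') := by
      rw [mulVec_mulVec, nonsing_inv_mul _ ((isUnit_iff_isUnit_det E).mp hE), one_mulVec]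
    _ = -(E⁻¹ *ᵥ M *ᵥ (z - z')) := by
      rw [← mulVec_neg]
      congr 1
      rw [mulVec_sub, mulVec_sub]
      linear_combination h₂
  have hschur : (B - A * E⁻¹ * M) *ᵥ (z - z') = 0 := by
    rw [sub_mulVec, ← mulVec_mulVec, ← mulVec_mulVec, ← neg_neg (E⁻¹ *ᵥ M *ᵥ (z - z')), ← hy,
      mulVec_neg, mulVec_sub, mulVec_sub]
    linear_combination h₁
  have hz : z = z' :=
    sub_eq_zero.mp (mulVec_injective_iff_isUnit.mpr hS (hschur.trans (mulVec_zero _).symm))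
  refine ⟨sub_eq_zero.mp ?_, hz⟩
  rw [hy, hz, sub_self, mulVec_zero, mulVec_zero, neg_zero]

end Matrix

section Surplus

variable {ι : Type*} [Fintype ι] (A B C D : Matrix ι ι ℝ) (f g : (ι → ℝ) → ℝ)

def bilinQuadSurplus (x y z : ι → ℝ) : ℝ :=
  x ⬝ᵥ A *ᵥ y + x ⬝ᵥ B *ᵥ z + y ⬝ᵥ C *ᵥ z + z ⬝ᵥ D *ᵥ z + f x + g y

lemma bilinQuadSurplus_eq_quadratic_snd (x y z : ι → ℝ) :
    bilinQuadSurplus A B C D f g x y z =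
      (Bᵀ *ᵥ x + Cᵀ *ᵥ y) ⬝ᵥ z + z ⬝ᵥ D *ᵥ z + (x ⬝ᵥ A *ᵥ y + f x + g y) := by
  simp only [bilinQuadSurplus, add_dotProduct, mulVec_transpose, ← dotProduct_mulVec]
  ring

lemma transpose_mulVec_add_eq_zero_of_le {x y z : ι → ℝ}
    (h : ∀ z', bilinQuadSurplus A B C D f g x y z' ≤ bilinQuadSurplus A B C D f g x y z) :
    Bᵀ *ᵥ x + Cᵀ *ᵥ y + (D + Dᵀ) *ᵥ z = 0 :=
  add_mulVec_eq_zero_of_le fun z' => by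
    simpa only [bilinQuadSurplus_eq_quadratic_snd, add_le_add_iff_right] using h z'

lemma fderiv_bilinQuadSurplus_fst_apply {x : ι → ℝ} (hf : DifferentiableAt ℝ f x)
    (y z v : ι → ℝ) :
    fderiv ℝ (fun x' => bilinQuadSurplus A B C D f g x' y z) x v =
      (A *ᵥ y + B *ᵥ z) ⬝ᵥ v + fderiv ℝ f x v := by
  set u := A *ᵥ y + B *ᵥ z
  have hlin : HasFDerivAt (fun x' => x' ⬝ᵥ u)
      (LinearMap.toContinuousLinearMap ((dotProductBilin ℝ ℝ).flip u)) x :=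
    LinearMap.toContinuousLinearMap ((dotProductBilin ℝ ℝ).flip u) |>.hasFDerivAt
  have hs : (fun x' => bilinQuadSurplus A B C D f g x' y z) =
      fun x' => x' ⬝ᵥ u + f x' + (y ⬝ᵥ C *ᵥ z + z ⬝ᵥ D *ᵥ z + g y) := by
    funext x'
    simp only [bilinQuadSurplus, u, dotProduct_add]
    ring
  rw [hs, ((hlin.fun_add hf.hasFDerivAt).add_const _).fderiv]
  simp [dotProduct_comm]

end Surplus

theorem stmt_12_general {n : ℕ} (A B C D : Matrix (Fin n) (Fin n) ℝ)
    (f g : (Fin n → ℝ) → ℝ) (hf : Differentiable ℝ f)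
    (hC : IsUnit C)
    (hBACD : IsUnit (B - A * (Cᵀ)⁻¹ * (D + Dᵀ))) :
    let s : (Fin n → ℝ) → (Fin n → ℝ) → (Fin n → ℝ) → ℝ := fun x y z =>
      x ⬝ᵥ A.mulVec y + x ⬝ᵥ B.mulVec z + y ⬝ᵥ C.mulVec z + z ⬝ᵥ D.mulVec z + f x + g y
    ∀ (x : Fin n → ℝ) (S : Set ((Fin n → ℝ) × (Fin n → ℝ))) (V : (Fin n → ℝ) → ℝ),
      (∀ y z, s x y z ≤ V y) → (∀ p ∈ S, s x p.1 p.2 = V p.1) →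
      ∀ p ∈ S, ∀ q ∈ S,
        fderiv ℝ (fun x' => s x' p.1 p.2) x = fderiv ℝ (fun x' => s x' q.1 q.2) x →
        p = q := by
  intro s x S V hle hS p hp q hq hderiv
  rw [show s = bilinQuadSurplus A B C D f g from rfl] at hle hS hderiv
  have hfoc : ∀ r ∈ S, Bᵀ *ᵥ x + Cᵀ *ᵥ r.1 + (D + Dᵀ) *ᵥ r.2 = 0 := fun r hr =>
    transpose_mulVec_add_eq_zero_of_le A B C D f g fun z => (hle r.1 z).trans_eq (hS r hr).symm
  have hAB : A *ᵥ p.1 + B *ᵥ p.2 = A *ᵥ q.1 + B *ᵥ q.2 := dotProduct_eq _ _ fun v => by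
    simpa only [fderiv_bilinQuadSurplus_fst_apply A B C D f g (hf x), add_left_inj]
      using congr($hderiv v)
  have hCD : Cᵀ *ᵥ p.1 + (D + Dᵀ) *ᵥ p.2 = Cᵀ *ᵥ q.1 + (D + Dᵀ) *ᵥ q.2 := by
    linear_combination hfoc p hp - hfoc q hq
  obtain ⟨hy, hz⟩ :=
    eq_and_eq_of_mulVec_add_mulVec_eq ((isUnit_transpose C).mpr hC) hBACD hAB hCD
  exact Prod.ext hy hz

/-- the bilinear-quadratic surplus is twisted on z-trivial splitting sets when
`D + Dᵀ < 0`, `C` is invertible and `B − A(Cᵀ)⁻¹(D + Dᵀ)` is nonsingular. -/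
theorem stmt_12 {n : ℕ} (A B C D : Matrix (Fin n) (Fin n) ℝ)
    (f g : (Fin n → ℝ) → ℝ) (hf : Differentiable ℝ f)
    (hD : (-(D + Dᵀ)).PosDef) (hC : IsUnit C)
    (hBACD : IsUnit (B - A * (Cᵀ)⁻¹ * (D + Dᵀ))) :
    let s : (Fin n → ℝ) → (Fin n → ℝ) → (Fin n → ℝ) → ℝ := fun x y z =>
      x ⬝ᵥ A.mulVec y + x ⬝ᵥ B.mulVec z + y ⬝ᵥ C.mulVec z + z ⬝ᵥ D.mulVec z + f x + g y
    ∀ (x : Fin n → ℝ) (S : Set ((Fin n → ℝ) × (Fin n → ℝ))) (V : (Fin n → ℝ) → ℝ),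
      (∀ y z, s x y z ≤ V y) → (∀ p ∈ S, s x p.1 p.2 = V p.1) →
      ∀ p ∈ S, ∀ q ∈ S,
        fderiv ℝ (fun x' => s x' p.1 p.2) x = fderiv ℝ (fun x' => s x' q.1 q.2) x →
        p = q :=
  stmt_12_general A B C D f g hf hC hBACD
end

section
/- The surplus s(x,y,z) = xy + xz − yz − z²/2 on ℝ³ is not twisted on z-trivial splitting sets: there exists x, a z-trivial splitting set S_x at x, and two distinct points (y₀,z₀) ≠ (y₁,z₁) in S_x with ∂_x s(x,y₀,z₀) = ∂_x s(x,y₁,z₁). -/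
/-- the surplus `s(x,y,z) = xy + xz − yz − z²/2` is NOT twisted on z-trivial
splitting sets: some z-trivial splitting set contains two distinct points with equal
`x`-partial derivative of `s`. -/
theorem stmt_15 :
    let s : ℝ → ℝ → ℝ → ℝ := fun x y z => x*y + x*z - y*z - z^2/2
    ∃ (x : ℝ) (S : Set (ℝ × ℝ)) (V : ℝ → ℝ),
      (∀ y z, s x y z ≤ V y) ∧ (∀ p ∈ S, s x p.1 p.2 = V p.1) ∧
      ∃ p q : ℝ × ℝ, p ∈ S ∧ q ∈ S ∧ p ≠ q ∧
        deriv (fun x' => s x' p.1 p.2) x = deriv (fun x' => s x' q.1 q.2) x := by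
  intro s
  refine ⟨0, {p | p.1 + p.2 = 0}, fun y => y^2/2, ?_, ?_, (0,0), (1,-1), by norm_num,
    by norm_num, by simp [Prod.ext_iff], ?_⟩
  · intro y z
    have h : (y + z)^2/2 ≥ 0 := by positivity
    simp only [s]
    nlinarith
  · intro p hp
    have h : p.1 + p.2 = 0 := hp
    simp only [s]
    nlinarith
  · have h1 : (fun x' : ℝ => s x' (0:ℝ) (0:ℝ)) = fun x' => -(0^2/2) := by
      funext x'; simp [s]
    have h2 : (fun x' : ℝ => s x' (1:ℝ) (-1:ℝ)) = fun x' => x'*1 + x'*(-1) - 1*(-1) - (-1:ℝ)^2/2 := rfl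
    simp only [s]
    have : ∀ (y z : ℝ), deriv (fun x' : ℝ => x'*y + x'*z - y*z - z^2/2) 0 = y + z := by
      intro y z
      have : (fun x' : ℝ => x'*y + x'*z - y*z - z^2/2) = fun x' => (y+z)*x' + (-(y*z) - z^2/2) := by
        funext x'; ring
      rw [this]
      simp [deriv_add, mul_comm]
    rw [this, this]; norm_num
end

section
/- Let σ be a probability measure on X × Y maximizing ∫ s̄ dσ over couplings of (μ,ν), where s̄(x,y) = max_{z∈Z} s(x,y,z), and let z̄ : X × Y → Z be a measurable selection with s(x,y,z̄(x,y)) = s̄(x,y). Then γ := (Id, Id, z̄)_# σ maximizes ∫ s dγ over probability measures on X × Y × Z with X-marginal μ and Y-marginal ν. Conversely, if γ maximizes the latter problem, then its projection γ_{XY} maximizes ∫ s̄ dσ over couplings of (μ,ν). -/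
open MeasureTheory

/-- equivalence between the hybrid problem and the reduced bipartite matching
problem with surplus `s̄(x,y) = max_z s(x,y,z)` via a measurable argmax selection `z̄`. -/
theorem stmt_19 {X Y Z : Type*}
    [MetricSpace X] [CompactSpace X] [MeasurableSpace X] [BorelSpace X]
    [MetricSpace Y] [CompactSpace Y] [MeasurableSpace Y] [BorelSpace Y]
    [MetricSpace Z] [CompactSpace Z] [MeasurableSpace Z] [BorelSpace Z] [Nonempty Z]
    (μ : Measure X) (ν : Measure Y) [IsProbabilityMeasure μ] [IsProbabilityMeasure ν]
    (s : X × Y × Z → ℝ) (hs : Continuous s)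
    (sbar : X × Y → ℝ) (hsbar : ∀ p : X × Y, sbar p = ⨆ z : Z, s (p.1, p.2, z))
    (zbar : X × Y → Z) (hzbar : Measurable zbar)
    (hsel : ∀ p : X × Y, s (p.1, p.2, zbar p) = sbar p) :
    -- (forward) an optimal coupling σ induces an optimal matching (Id,Id,z̄)_# σ
    (∀ σ : Measure (X × Y), IsProbabilityMeasure σ →
      σ.map Prod.fst = μ → σ.map Prod.snd = ν →
      (∀ σ' : Measure (X × Y), IsProbabilityMeasure σ' →
        σ'.map Prod.fst = μ → σ'.map Prod.snd = ν →
        ∫ p, sbar p ∂σ' ≤ ∫ p, sbar p ∂σ) →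
      ∀ γ' : Measure (X × Y × Z), IsProbabilityMeasure γ' →
        γ'.map Prod.fst = μ → γ'.map (fun w => w.2.1) = ν →
        ∫ w, s w ∂γ' ≤ ∫ w, s w ∂(σ.map (fun p => (p.1, p.2, zbar p)))) ∧
    -- (converse) the XY-projection of an optimal matching is an optimal coupling
    (∀ γ : Measure (X × Y × Z), IsProbabilityMeasure γ →
      γ.map Prod.fst = μ → γ.map (fun w => w.2.1) = ν →
      (∀ γ' : Measure (X × Y × Z), IsProbabilityMeasure γ' →
        γ'.map Prod.fst = μ → γ'.map (fun w => w.2.1) = ν →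
        ∫ w, s w ∂γ' ≤ ∫ w, s w ∂γ) →
      ∀ σ' : Measure (X × Y), IsProbabilityMeasure σ' →
        σ'.map Prod.fst = μ → σ'.map Prod.snd = ν →
        ∫ p, sbar p ∂σ' ≤ ∫ p, sbar p ∂(γ.map (fun w => (w.1, w.2.1)))) := by
  -- basic measurability
  have hT : Measurable (fun p : X × Y => (p.1, p.2, zbar p)) :=
    measurable_fst.prodMk (measurable_snd.prodMk hzbar)
  have hπ : Measurable (fun w : X × Y × Z => (w.1, w.2.1)) :=
    measurable_fst.prodMk measurable_snd.fst
  have hsm : Measurable s := hs.measurable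
  have hsbarm : Measurable sbar := by
    have : sbar = fun p => s (p.1, p.2, zbar p) := by
      funext p; rw [hsel p]
    rw [this]; exact hsm.comp hT
  -- boundedness
  obtain ⟨C, hC⟩ : ∃ C, ∀ w, ‖s w‖ ≤ C := by
    obtain ⟨C, hC⟩ := (isCompact_range (hs.norm)).bddAbove
    exact ⟨C, fun w => hC ⟨w, rfl⟩⟩
  have hsbarC : ∀ p, ‖sbar p‖ ≤ C := fun p => by
    rw [← hsel p]; exact hC _
  have hints : ∀ (m : Measure (X × Y × Z)), IsProbabilityMeasure m → Integrable s m := by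
    intro m _
    exact (integrable_const C).mono' hsm.aestronglyMeasurable (Filter.Eventually.of_forall hC)
  have hintsb : ∀ (m : Measure (X × Y)), IsProbabilityMeasure m → Integrable sbar m := by
    intro m _
    exact (integrable_const C).mono' hsbarm.aestronglyMeasurable
      (Filter.Eventually.of_forall hsbarC)
  -- pointwise bound s w ≤ sbar (w.1, w.2.1)
  have hle : ∀ w : X × Y × Z, s w ≤ sbar (w.1, w.2.1) := by
    intro w
    rw [hsbar]
    have hbdd : BddAbove (Set.range fun z : Z => s (w.1, w.2.1, z)) :=
      (isCompact_range (hs.comp (by continuity))).bddAbove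
    exact le_ciSup hbdd w.2.2
  -- key identities
  have key1 : ∀ (σ : Measure (X × Y)),
      ∫ w, s w ∂(σ.map (fun p => (p.1, p.2, zbar p))) = ∫ p, sbar p ∂σ := by
    intro σ
    rw [integral_map hT.aemeasurable hsm.aestronglyMeasurable]
    simp only [hsel]
  have key2 : ∀ (γ : Measure (X × Y × Z)),
      ∫ p, sbar p ∂(γ.map (fun w => (w.1, w.2.1))) = ∫ w, sbar (w.1, w.2.1) ∂γ := by
    intro γ
    rw [integral_map hπ.aemeasurable hsbarm.aestronglyMeasurable]
  -- projection preserves marginals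
  have proj_marg : ∀ (γ : Measure (X × Y × Z)),
      (γ.map (fun w => (w.1, w.2.1))).map Prod.fst = γ.map Prod.fst ∧
      (γ.map (fun w => (w.1, w.2.1))).map Prod.snd = γ.map (fun w => w.2.1) := by
    intro γ
    constructor
    · rw [Measure.map_map measurable_fst hπ]; rfl
    · rw [Measure.map_map measurable_snd hπ]; rfl
  have lift_marg : ∀ (σ : Measure (X × Y)),
      (σ.map (fun p => (p.1, p.2, zbar p))).map Prod.fst = σ.map Prod.fst ∧
      (σ.map (fun p => (p.1, p.2, zbar p))).map (fun w : X × Y × Z => w.2.1)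
        = σ.map Prod.snd := by
    intro σ
    constructor
    · rw [Measure.map_map measurable_fst hT]; rfl
    · rw [Measure.map_map measurable_snd.fst hT]; rfl
  -- the comparison: for any matching γ', ∫ s dγ' ≤ ∫ sbar d(proj γ')
  have comp : ∀ (γ' : Measure (X × Y × Z)), IsProbabilityMeasure γ' →
      ∫ w, s w ∂γ' ≤ ∫ p, sbar p ∂(γ'.map (fun w => (w.1, w.2.1))) := by
    intro γ' hγ'
    rw [key2]
    refine integral_mono (hints γ' hγ') ?_ hle
    exact (integrable_const C).mono' (hsbarm.comp hπ).aestronglyMeasurable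
      (Filter.Eventually.of_forall fun w => hsbarC _)
  constructor
  · -- forward
    intro σ hσ hσ1 hσ2 hopt γ' hγ' hγ'1 hγ'2
    rw [key1]
    calc ∫ w, s w ∂γ' ≤ ∫ p, sbar p ∂(γ'.map (fun w => (w.1, w.2.1))) := comp γ' hγ'
      _ ≤ ∫ p, sbar p ∂σ := by
          refine hopt _ (Measure.isProbabilityMeasure_map hπ.aemeasurable) ?_ ?_
          · rw [(proj_marg γ').1, hγ'1]
          · rw [(proj_marg γ').2, hγ'2]
  · -- converse
    intro γ hγ hγ1 hγ2 hopt σ' hσ' hσ'1 hσ'2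
    have hγσ : IsProbabilityMeasure (σ'.map (fun p => (p.1, p.2, zbar p))) :=
      Measure.isProbabilityMeasure_map hT.aemeasurable
    calc ∫ p, sbar p ∂σ'
        = ∫ w, s w ∂(σ'.map (fun p => (p.1, p.2, zbar p))) := (key1 σ').symm
      _ ≤ ∫ w, s w ∂γ := by
          refine hopt _ hγσ ?_ ?_
          · rw [(lift_marg σ').1, hσ'1]
          · rw [(lift_marg σ').2, hσ'2]
      _ ≤ ∫ p, sbar p ∂(γ.map (fun w => (w.1, w.2.1))) := comp γ hγ
end
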